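/- arXiv:1506.08162 — 2 statements merged into one kernel-verified Lean document; each statement's English description precedes it below -/
import Mathlib

section
/- (Lemma 2.) Assume 0 < γ ≤ 2. Let (φ, y, ρ, H) be a right-maximal solution of the flat FLRW system on I = [t₀, T) satisfying the Friedmann constraint at every t ∈ I and with ρ(t₀) ≥ 0. Suppose there exist t₁ ∈ I and V̄ ∈ ℝ such that V(φ(t)) ≤ V̄ for all t ∈ I with t ≥ t₁, and that either (i) V̄ < 0, or (ii) V̄ ≥ 0 and H(t₁) < −√(V̄/3). Then T < ∞ and H(t) → −∞ as t → T⁻. -/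
open Real Set Filter

/-- A solution of the flat FLRW system on the set `I`:
`φ' = y`, `y' = -3Hy - V'(φ) + α(φ)ρ`, `ρ' = -ρ(3γH + α(φ)y)`, `H' = -(1/2)(y² + γρ)`. -/
def IsFLRWSolution (γ : ℝ) (α V : ℝ → ℝ) (I : Set ℝ) (φ y ρ H : ℝ → ℝ) : Prop :=
  ∀ t ∈ I,
    HasDerivWithinAt φ (y t) I t ∧
    HasDerivWithinAt y (-3 * H t * y t - deriv V (φ t) + α (φ t) * ρ t) I t ∧
    HasDerivWithinAt ρ (-(ρ t) * (3 * γ * H t + α (φ t) * y t)) I t ∧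
    HasDerivWithinAt H (-(1/2) * (y t ^ 2 + γ * ρ t)) I t

/-- The Friedmann constraint `3H² = (1/2)y² + V(φ) + ρ` at time `t`. -/
def FriedmannConstraint (V : ℝ → ℝ) (φ y ρ H : ℝ → ℝ) (t : ℝ) : Prop :=
  3 * H t ^ 2 = (1/2) * y t ^ 2 + V (φ t) + ρ t

/-- The interval `[t₀, T)` with possibly infinite right endpoint `T : EReal`. -/
def IcoE (t₀ : ℝ) (T : EReal) : Set ℝ := {t : ℝ | t₀ ≤ t ∧ (t : EReal) < T}

/-- The filter of real times `t → T⁻` (this is `𝓝[<] T` for finite `T`, and `atTop`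
for `T = ⊤`). -/
noncomputable def leftLimFilter (T : EReal) : Filter ℝ :=
  Filter.comap (fun t : ℝ => (t : EReal)) (nhdsWithin T (Set.Iio T))

/-- The solution `(φ, y, ρ, H)` on `[t₀, T)` extends to a solution of the same system
on the set `J`. -/
def ExtendsSol (γ : ℝ) (α V : ℝ → ℝ) (t₀ : ℝ) (T : EReal)
    (φ y ρ H : ℝ → ℝ) (J : Set ℝ) : Prop :=
  ∃ φ' y' ρ' H' : ℝ → ℝ,
    IsFLRWSolution γ α V J φ' y' ρ' H' ∧
    Set.EqOn φ φ' (IcoE t₀ T) ∧ Set.EqOn y y' (IcoE t₀ T) ∧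
    Set.EqOn ρ ρ' (IcoE t₀ T) ∧ Set.EqOn H H' (IcoE t₀ T)

/-- A solution on `[t₀, T)` is right-maximal if it can be extended neither to a solution
on `[t₀, T]` (when `T` is finite) nor to a solution on `[t₀, T')` for some `T' > T`. -/
def RightMaximal (γ : ℝ) (α V : ℝ → ℝ) (t₀ : ℝ) (T : EReal)
    (φ y ρ H : ℝ → ℝ) : Prop :=
  ¬ ((T ≠ ⊤ ∧ ExtendsSol γ α V t₀ T φ y ρ H (Set.Icc t₀ T.toReal)) ∨
     (∃ T' : EReal, T < T' ∧ ExtendsSol γ α V t₀ T φ y ρ H (IcoE t₀ T')))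

open Topology

/-!
The Hubble rate decreases, `H' = -(y² + γρ)/2 ≤ 0`, once `ρ ≥ 0` is known (`ρ` solves a linear
equation). Eliminating `ρ` with the Friedmann constraint, `γ ≤ 2` and `V(φ) ≤ V̄` give the Riccati
inequality `H' ≤ -(3γ/2)(H² - V̄/3)`. In both cases `H` becomes negative with `H' ≤ -c H²`, so the
positive quantity `-1/H` would decrease at rate `c` forever: hence `T < ∞`. Being decreasing, `H`
either tends to `-∞` or stays bounded. In the bounded case `|φ'| ≤ 1/2 - H'` bounds `φ`, the
constraint then bounds `y` and `ρ`, the right-hand side of the system stays bounded, and the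
solution extends continuously to `[t₀, T]`, contradicting maximality.
-/

theorem Convex.antitoneOn_of_hasDerivWithinAt_nonpos {D : Set ℝ} (hD : Convex ℝ D)
    {f f' : ℝ → ℝ} (hf : ∀ x ∈ D, HasDerivWithinAt f (f' x) D x) (hf' : ∀ x ∈ D, f' x ≤ 0) :
    AntitoneOn f D :=
  _root_.antitoneOn_of_hasDerivWithinAt_nonpos hD (fun x hx => (hf x hx).continuousWithinAt)
    (fun x hx => (hf x (interior_subset hx)).mono interior_subset)
    (fun x hx => hf' x (interior_subset hx))

theorem Convex.sub_le_sub_of_hasDerivWithinAt_le {D : Set ℝ} (hD : Convex ℝ D)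
    {f f' g g' : ℝ → ℝ} (hf : ∀ x ∈ D, HasDerivWithinAt f (f' x) D x)
    (hg : ∀ x ∈ D, HasDerivWithinAt g (g' x) D x) (hle : ∀ x ∈ D, f' x ≤ g' x)
    {a b : ℝ} (ha : a ∈ D) (hb : b ∈ D) (hab : a ≤ b) : f b - f a ≤ g b - g a := by
  have := hD.antitoneOn_of_hasDerivWithinAt_nonpos (fun x hx => (hf x hx).sub (hg x hx))
    (fun x hx => sub_nonpos.2 (hle x hx)) ha hb hab
  rw [Pi.sub_apply, Pi.sub_apply] at this
  linarith

theorem Convex.sub_le_mul_sub_of_hasDerivWithinAt_le {D : Set ℝ} (hD : Convex ℝ D)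
    {f f' : ℝ → ℝ} {C : ℝ} (hf : ∀ x ∈ D, HasDerivWithinAt f (f' x) D x)
    (hle : ∀ x ∈ D, f' x ≤ C) {a b : ℝ} (ha : a ∈ D) (hb : b ∈ D) (hab : a ≤ b) :
    f b - f a ≤ C * (b - a) := by
  have := hD.sub_le_sub_of_hasDerivWithinAt_le hf
    (fun x _ => (hasDerivAt_mul_const C).hasDerivWithinAt) hle ha hb hab
  linarith

theorem nonneg_of_hasDerivWithinAt_mul_self {f g : ℝ → ℝ} {a b : ℝ} (hab : a ≤ b)
    (hf : ∀ t ∈ Icc a b, HasDerivWithinAt f (g t * f t) (Icc a b) t)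
    (hg : ContinuousOn g (Icc a b)) (ha : 0 ≤ f a) : 0 ≤ f b := by
  by_contra! hb
  have hfc : ContinuousOn f (Icc a b) := fun t ht => (hf t ht).continuousWithinAt
  obtain ⟨c, hc, hfc0⟩ := intermediate_value_Icc' hab hfc ⟨hb.le, ha⟩
  obtain ⟨K, hK⟩ := isCompact_Icc.exists_bound_of_continuousOn hg
  have hcb : Icc c b ⊆ Icc a b := Icc_subset_Icc_left hc.1
  -- a linear equation `f' = g f` with `f c = 0` forces `f = 0` after `c` (Gronwall)
  have hzero := eq_zero_of_abs_deriv_le_mul_abs_self_of_eq_zero_right (K := K)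
    (hfc.mono hcb)
    (fun x hx => (hf x (hcb (Ico_subset_Icc_self hx))).mono_of_mem_nhdsWithin
      (mem_of_superset (Icc_mem_nhdsGE hx.2) (Icc_subset_Icc_left hx.1 |>.trans hcb)))
    hfc0 (fun x hx => by
      rw [norm_mul]
      exact mul_le_mul_of_nonneg_right (hK x (hcb (Ico_subset_Icc_self hx))) (norm_nonneg _))
  exact hb.ne (hzero b (right_mem_Icc.2 hc.2))

theorem Convex.exists_continuous_eqOn_of_hasDerivWithinAt {s : Set ℝ} (hs : Convex ℝ s)
    {f f' : ℝ → ℝ} {C : ℝ} (hf : ∀ x ∈ s, HasDerivWithinAt f (f' x) s x)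
    (hC : ∀ x ∈ s, |f' x| ≤ C) : ∃ F, Continuous F ∧ EqOn f F s := by
  obtain ⟨F, hF, hfF⟩ := (hs.lipschitzOnWith_of_nnnorm_hasDerivWithin_le (C := C.toNNReal) hf
    fun x hx => by
      rw [← NNReal.coe_le_coe, coe_nnnorm, Real.norm_eq_abs]
      exact (hC x hx).trans (le_max_left _ _)).extend_real
  exact ⟨F, hF.continuous, hfF⟩

theorem hasDerivWithinAt_Icc_of_eqOn_Ico {f f' F G : ℝ → ℝ} {a b : ℝ} (hab : a < b)
    (hF : Continuous F) (hG : Continuous G) (hfF : EqOn f F (Ico a b))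
    (hf'G : EqOn f' G (Ico a b)) (hf : ∀ x ∈ Ico a b, HasDerivWithinAt f (f' x) (Ico a b) x) :
    ∀ x ∈ Icc a b, HasDerivWithinAt F (G x) (Icc a b) x := by
  have hFd : ∀ x ∈ Ico a b, HasDerivWithinAt F (G x) (Icc a b) x := fun x hx => by
    have hnhds : Ico a b ∈ 𝓝[Icc a b] x :=
      mem_nhdsWithin.2 ⟨Iio b, isOpen_Iio, hx.2, fun u hu => ⟨hu.2.1, hu.1⟩⟩
    exact ((hf'G hx ▸ hf x hx).mono_of_mem_nhdsWithin hnhds).congr_of_eventuallyEq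
      (mem_of_superset hnhds fun u hu => (hfF hu).symm) (hfF hx).symm
  intro x hx
  rcases hx.2.lt_or_eq with hxb | rfl
  · exact hFd x ⟨hx.1, hxb⟩
  -- at the right endpoint, the derivative is the limit of the derivatives from the left
  have hs : Ioo a x ∈ 𝓝[<] x := Ioo_mem_nhdsLT hab
  have hlim : Tendsto (deriv F) (𝓝[<] x) (𝓝 (G x)) :=
    ((hG.tendsto x).mono_left nhdsWithin_le_nhds).congr' <| by
      filter_upwards [hs] with u hu
      exact ((hFd u ⟨hu.1.le, hu.2⟩).hasDerivAt (Icc_mem_nhds hu.1 hu.2)).deriv.symm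
  exact (hasDerivWithinAt_Iic_of_tendsto_deriv
    (fun u hu => (hFd u ⟨hu.1.le, hu.2⟩).differentiableWithinAt.differentiableAt
      (Icc_mem_nhds hu.1 hu.2) |>.differentiableWithinAt)
    hF.continuousWithinAt hs hlim).mono Icc_subset_Iic_self

theorem false_of_hasDerivWithinAt_Ici_le_neg_mul_sq {h h' : ℝ → ℝ} {a c : ℝ} (hc : 0 < c)
    (hd : ∀ t ∈ Ici a, HasDerivWithinAt h (h' t) (Ici a) t)
    (hle : ∀ t ∈ Ici a, h' t ≤ -c * h t ^ 2) (ha : h a < 0) : False := by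
  have hanti : AntitoneOn h (Ici a) := (convex_Ici a).antitoneOn_of_hasDerivWithinAt_nonpos hd
    fun t ht => (hle t ht).trans (by nlinarith [sq_nonneg (h t)])
  have hneg : ∀ t ∈ Ici a, h t < 0 := fun t ht => (hanti self_mem_Ici ht ht).trans_lt ha
  -- `-1/h` is positive but decreases at rate at least `c`
  have hinv : ∀ t ∈ Ici a, HasDerivWithinAt (fun s => -(h s)⁻¹) (h' t / h t ^ 2) (Ici a) t :=
    fun t ht => ((hd t ht).inv (hneg t ht).ne).neg.congr_deriv (by ring)
  have hab : a ≤ a + -(h a)⁻¹ / c :=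
    le_add_of_nonneg_right (div_nonneg (neg_nonneg.2 (inv_nonpos.2 ha.le)) hc.le)
  have hdecay := (convex_Ici a).sub_le_mul_sub_of_hasDerivWithinAt_le hinv
    (fun t ht => (div_le_iff₀ (sq_pos_of_neg (hneg t ht))).2 (hle t ht)) self_mem_Ici hab hab
  have hpos : 0 < -(h (a + -(h a)⁻¹ / c))⁻¹ := neg_pos.2 (inv_lt_zero.2 (hneg _ hab))
  rw [add_sub_cancel_left, neg_mul, mul_div_cancel₀ _ hc.ne'] at hdecay
  linarith

theorem false_of_hasDerivWithinAt_Ici_le_neg_mul_sq_sub {h h' : ℝ → ℝ} {a k m : ℝ} (hk : 0 < k)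
    (hd : ∀ t ∈ Ici a, HasDerivWithinAt h (h' t) (Ici a) t) (hnonpos : ∀ t ∈ Ici a, h' t ≤ 0)
    (hle : ∀ t ∈ Ici a, h' t ≤ -k * (h t ^ 2 - m)) (hm : m < 0 ∨ (0 ≤ m ∧ h a < -√m)) :
    False := by
  rcases hm with hm | ⟨hm, ha⟩
  · -- `h` decreases at least linearly, so becomes negative at some `b`; then `h' ≤ -k h²`
    have hkm : k * m < 0 := mul_neg_of_pos_of_neg hk hm
    set b := a + (|h a| + 1) / -(k * m)
    have hab : a ≤ b := le_add_of_nonneg_right (div_nonneg (by positivity) (by linarith))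
    have hdecay := (convex_Ici a).sub_le_mul_sub_of_hasDerivWithinAt_le (C := k * m) hd
      (fun t ht => (hle t ht).trans (by nlinarith [sq_nonneg (h t)])) self_mem_Ici hab hab
    have hdrop : k * m * (b - a) = -(|h a| + 1) := by
      rw [add_sub_cancel_left, mul_div_assoc', div_neg, mul_div_cancel_left₀ _ hkm.ne]
    have hb : h b < 0 := by linarith [le_abs_self (h a)]
    exact false_of_hasDerivWithinAt_Ici_le_neg_mul_sq hk
      (fun t ht => (hd t (Ici_subset_Ici.2 hab ht)).mono (Ici_subset_Ici.2 hab))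
      (fun t ht => (hle t (Ici_subset_Ici.2 hab ht)).trans (by linarith)) hb
  · -- from `a` on, `h ≤ h a < 0`, so `h² - m ≥ (1 - m / (h a)²) h²` with a positive factor
    have hanti : AntitoneOn h (Ici a) :=
      (convex_Ici a).antitoneOn_of_hasDerivWithinAt_nonpos hd hnonpos
    have hma : m < h a ^ 2 := by
      simpa using Real.lt_sq_of_sqrt_lt (by linarith : √m < -h a)
    have ha2 : 0 < h a ^ 2 := hm.trans_lt hma
    refine false_of_hasDerivWithinAt_Ici_le_neg_mul_sq
      (div_pos (mul_pos hk (sub_pos.2 hma)) ha2) hd (fun t ht => (hle t ht).trans ?_)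
      (by linarith [Real.sqrt_nonneg m])
    have hsq : h a ^ 2 ≤ h t ^ 2 := by
      nlinarith [hanti self_mem_Ici ht ht, Real.sqrt_nonneg m]
    rw [neg_mul, neg_mul, neg_le_neg_iff, div_mul_eq_mul_div, div_le_iff₀ ha2]
    nlinarith [mul_nonneg (mul_nonneg hk.le hm) (sub_nonneg.2 hsq)]

theorem convex_IcoE (t₀ : ℝ) (T : EReal) : Convex ℝ (IcoE t₀ T) :=
  Set.OrdConnected.convex ⟨fun _ ha _ hb _ ht =>
    ⟨ha.1.trans ht.1, (EReal.coe_le_coe_iff.2 ht.2).trans_lt hb.2⟩⟩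

theorem IcoE_coe (t₀ b : ℝ) : IcoE t₀ b = Ico t₀ b := by
  ext t
  simp [IcoE, EReal.coe_lt_coe_iff]

theorem IcoE_top (t₀ : ℝ) : IcoE t₀ ⊤ = Ici t₀ := by
  ext t
  simp [IcoE]

theorem Icc_subset_IcoE {t₀ s : ℝ} {T : EReal} (hs : s ∈ IcoE t₀ T) : Icc t₀ s ⊆ IcoE t₀ T :=
  fun _ ht => ⟨ht.1, (EReal.coe_le_coe_iff.2 ht.2).trans_lt hs.2⟩

theorem tendsto_leftLimFilter_atBot_of_antitoneOn {f : ℝ → ℝ} {t₀ : ℝ} {T : EReal}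
    (hf : AntitoneOn f (IcoE t₀ T)) (hunb : ¬BddBelow (f '' IcoE t₀ T)) :
    Tendsto f (leftLimFilter T) atBot := by
  refine tendsto_atBot.2 fun M => ?_
  obtain ⟨_, ⟨s, hs, rfl⟩, hsM⟩ := not_bddBelow_iff.1 hunb M
  refine mem_comap.2 ⟨Ioo (s : EReal) T, Ioo_mem_nhdsLT hs.2, fun t ht => ?_⟩
  have hst : s < t := EReal.coe_lt_coe_iff.1 ht.1
  exact (hf hs ⟨hs.1.trans hst.le, ht.2⟩ hst.le).trans hsM.le

theorem hubble_deriv_le_of_potential_le {γ y ρ H v Vbar : ℝ} (hγ : 0 ≤ γ) (hγ2 : γ ≤ 2)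
    (hc : 3 * H ^ 2 = (1/2) * y ^ 2 + v + ρ) (hv : v ≤ Vbar) :
    -(1/2) * (y ^ 2 + γ * ρ) ≤ -(3 * γ / 2) * (H ^ 2 - Vbar / 3) := by
  nlinarith [mul_nonneg (sub_nonneg.2 hγ2) (sq_nonneg y), mul_nonneg hγ (sub_nonneg.2 hv)]

namespace IsFLRWSolution

variable {γ : ℝ} {α V : ℝ → ℝ} {I : Set ℝ} {t₀ : ℝ} {φ y ρ H : ℝ → ℝ}

theorem mono {J : Set ℝ} (hsol : IsFLRWSolution γ α V I φ y ρ H) (hJ : J ⊆ I) :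
    IsFLRWSolution γ α V J φ y ρ H := fun t ht =>
  let ⟨h₁, h₂, h₃, h₄⟩ := hsol t (hJ ht)
  ⟨h₁.mono hJ, h₂.mono hJ, h₃.mono hJ, h₄.mono hJ⟩

theorem rho_nonneg {T : EReal} (hα : Continuous α)
    (hsol : IsFLRWSolution γ α V (IcoE t₀ T) φ y ρ H) (hρ₀ : 0 ≤ ρ t₀) :
    ∀ t ∈ IcoE t₀ T, 0 ≤ ρ t := by
  intro s hs
  have hsol' := hsol.mono (Icc_subset_IcoE hs)
  have hcont : ∀ {f f' : ℝ → ℝ}, (∀ t ∈ Icc t₀ s, HasDerivWithinAt f (f' t) (Icc t₀ s) t) →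
      ContinuousOn f (Icc t₀ s) := fun hf t ht => (hf t ht).continuousWithinAt
  have hφ := hcont fun t ht => (hsol' t ht).1
  have hy := hcont fun t ht => (hsol' t ht).2.1
  have hH := hcont fun t ht => (hsol' t ht).2.2.2
  exact nonneg_of_hasDerivWithinAt_mul_self hs.1
    (g := fun t => -(3 * γ * H t + α (φ t) * y t))
    (fun t ht => (hsol' t ht).2.2.1.congr_deriv (by ring))
    ((continuousOn_const.mul hH).add ((hα.comp_continuousOn hφ).mul hy)).neg hρ₀

theorem antitoneOn_hubble (hI : Convex ℝ I) (hγ : 0 ≤ γ)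
    (hsol : IsFLRWSolution γ α V I φ y ρ H) (hρ : ∀ t ∈ I, 0 ≤ ρ t) : AntitoneOn H I :=
  hI.antitoneOn_of_hasDerivWithinAt_nonpos (fun t ht => (hsol t ht).2.2.2) fun t ht => by
    nlinarith [sq_nonneg (y t), mul_nonneg hγ (hρ t ht)]

-- `|φ'| = |y| ≤ (1 + y²) / 2 ≤ 1/2 - H'`
theorem abs_phi_sub_le (hI : Convex ℝ I) (hγ : 0 ≤ γ)
    (hsol : IsFLRWSolution γ α V I φ y ρ H) (hρ : ∀ t ∈ I, 0 ≤ ρ t) {s t : ℝ}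
    (hs : s ∈ I) (ht : t ∈ I) (hst : s ≤ t) : |φ t - φ s| ≤ (t - s) / 2 + (H s - H t) := by
  have hg : ∀ x ∈ I, HasDerivWithinAt (fun u => u / 2 - H u)
      (1 / 2 + (1/2) * (y x ^ 2 + γ * ρ x)) I x := fun x hx =>
    ((hasDerivWithinAt_id x I).div_const 2).sub (hsol x hx).2.2.2 |>.congr_deriv (by simp)
  have hle : ∀ x ∈ I, |y x| ≤ 1 / 2 + (1/2) * (y x ^ 2 + γ * ρ x) := fun x hx => by
    nlinarith [abs_nonneg (y x), sq_abs (y x), sq_nonneg (|y x| - 1), mul_nonneg hγ (hρ x hx)]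
  have hup := hI.sub_le_sub_of_hasDerivWithinAt_le (fun x hx => (hsol x hx).1) hg
    (fun x hx => (le_abs_self _).trans (hle x hx)) hs ht hst
  have hdown := hI.sub_le_sub_of_hasDerivWithinAt_le (fun x hx => (hsol x hx).1.neg) hg
    (fun x hx => (neg_le_abs _).trans (hle x hx)) hs ht hst
  rw [Pi.neg_apply, Pi.neg_apply] at hdown
  rw [abs_le]
  constructor <;> linarith

theorem lt_top_of_potential_le {T : EReal} (hγ : 0 < γ) (hγ2 : γ ≤ 2)
    (hsol : IsFLRWSolution γ α V (IcoE t₀ T) φ y ρ H)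
    (hcon : ∀ t ∈ IcoE t₀ T, FriedmannConstraint V φ y ρ H t) (hρ : ∀ t ∈ IcoE t₀ T, 0 ≤ ρ t)
    {t₁ Vbar : ℝ} (ht₁ : t₀ ≤ t₁) (hbound : ∀ t ∈ IcoE t₀ T, t₁ ≤ t → V (φ t) ≤ Vbar)
    (hcase : Vbar < 0 ∨ (0 ≤ Vbar ∧ H t₁ < -√(Vbar / 3))) : T < ⊤ := by
  rw [lt_top_iff_ne_top]
  rintro rfl
  rw [IcoE_top] at hsol hcon hρ hbound
  have hsub : Ici t₁ ⊆ Ici t₀ := Ici_subset_Ici.2 ht₁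
  refine false_of_hasDerivWithinAt_Ici_le_neg_mul_sq_sub (k := 3 * γ / 2) (m := Vbar / 3)
    (by positivity) (fun t ht => (hsol t (hsub ht)).2.2.2.mono hsub)
    (fun t ht => by nlinarith [sq_nonneg (y t), mul_nonneg hγ.le (hρ t (hsub ht))])
    (fun t ht => hubble_deriv_le_of_potential_le hγ.le hγ2 (hcon t (hsub ht))
      (hbound t (hsub ht) ht)) ?_
  rcases hcase with hV | ⟨hV, hH⟩
  · exact Or.inl (by linarith)
  · exact Or.inr ⟨by positivity, hH⟩

theorem exists_isCompact_forall_mem_of_le_hubble {τ L : ℝ} (hγ : 0 ≤ γ) (hV : Continuous V)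
    (hsol : IsFLRWSolution γ α V (IcoE t₀ τ) φ y ρ H)
    (hcon : ∀ t ∈ IcoE t₀ τ, FriedmannConstraint V φ y ρ H t) (hρ : ∀ t ∈ IcoE t₀ τ, 0 ≤ ρ t)
    (hL : ∀ t ∈ IcoE t₀ τ, L ≤ H t) :
    ∃ K : Set (ℝ × ℝ × ℝ × ℝ), IsCompact K ∧ ∀ t ∈ IcoE t₀ τ, (φ t, y t, ρ t, H t) ∈ K := by
  set M := (τ - t₀) / 2 + (H t₀ - L) with hM
  obtain ⟨CV, hCV⟩ := isCompact_Icc.exists_bound_of_continuousOn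
    (hV.continuousOn (s := Icc (φ t₀ - M) (φ t₀ + M)))
  set C := 3 * (L ^ 2 + H t₀ ^ 2) + CV with hC
  refine ⟨Icc (φ t₀ - M, -√(2 * C), 0, L) (φ t₀ + M, √(2 * C), C, H t₀), isCompact_Icc,
    fun t ht => ?_⟩
  have ht₀ : t₀ ∈ IcoE t₀ τ := ⟨le_rfl, (EReal.coe_le_coe_iff.2 ht.1).trans_lt ht.2⟩
  have htτ : t < τ := EReal.coe_lt_coe_iff.1 ht.2
  have hHt := hsol.antitoneOn_hubble (convex_IcoE t₀ τ) hγ hρ ht₀ ht ht.1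
  have hφ := abs_le.1 <| (hsol.abs_phi_sub_le (convex_IcoE t₀ τ) hγ hρ ht₀ ht ht.1).trans
    (by linarith [hL t ht] : (t - t₀) / 2 + (H t₀ - H t) ≤ M)
  have hVt := abs_le.1 (Real.norm_eq_abs _ ▸ hCV (φ t) ⟨by linarith, by linarith⟩)
  have hH2 : H t ^ 2 ≤ L ^ 2 + H t₀ ^ 2 := by
    rcases le_or_gt 0 (H t) with h | h <;> nlinarith [hL t ht]
  have hkin : (1/2) * y t ^ 2 + ρ t ≤ C := by
    have hF : 3 * H t ^ 2 = (1/2) * y t ^ 2 + V (φ t) + ρ t := hcon t ht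
    linarith
  have hy := abs_le.1 (Real.abs_le_sqrt (by linarith [hρ t ht] : y t ^ 2 ≤ 2 * C))
  simp only [mem_Icc, Prod.mk_le_mk]
  exact ⟨⟨by linarith, hy.1, hρ t ht, hL t ht⟩,
    ⟨by linarith, hy.2, by linarith [sq_nonneg (y t)], hHt⟩⟩

theorem extendsSol_Icc (hα : Continuous α) (hV : Continuous (deriv V)) {b : ℝ} (hb : t₀ < b)
    (hsol : IsFLRWSolution γ α V (IcoE t₀ b) φ y ρ H) {K : Set (ℝ × ℝ × ℝ × ℝ)}
    (hK : IsCompact K) (hmem : ∀ t ∈ IcoE t₀ b, (φ t, y t, ρ t, H t) ∈ K) :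
    ExtendsSol γ α V t₀ b φ y ρ H (Icc t₀ b) := by
  simp only [ExtendsSol, IcoE_coe] at hsol hmem ⊢
  -- each right-hand side is a continuous function of the state, hence bounded on `[t₀, b)`
  have hext : ∀ {f : ℝ → ℝ} (F : ℝ × ℝ × ℝ × ℝ → ℝ), Continuous F →
      (∀ t ∈ Ico t₀ b, HasDerivWithinAt f (F (φ t, y t, ρ t, H t)) (Ico t₀ b) t) →
      ∃ g, Continuous g ∧ EqOn f g (Ico t₀ b) := fun F hF hf => by
    obtain ⟨C, hC⟩ := hK.exists_bound_of_continuousOn hF.continuousOn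
    exact (convex_Ico t₀ b).exists_continuous_eqOn_of_hasDerivWithinAt hf
      fun t ht => hC _ (hmem t ht)
  obtain ⟨Φ, hΦ, hφΦ⟩ := hext (fun p => p.2.1) (by fun_prop) fun t ht => (hsol t ht).1
  obtain ⟨Y, hY, hyY⟩ := hext (fun p => -3 * p.2.2.2 * p.2.1 - deriv V p.1 + α p.1 * p.2.2.1)
    (by fun_prop) fun t ht => (hsol t ht).2.1
  obtain ⟨R, hR, hρR⟩ := hext (fun p => -p.2.2.1 * (3 * γ * p.2.2.2 + α p.1 * p.2.1))
    (by fun_prop) fun t ht => (hsol t ht).2.2.1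
  obtain ⟨G, hG, hHG⟩ := hext (fun p => -(1/2) * (p.2.1 ^ 2 + γ * p.2.2.1))
    (by fun_prop) fun t ht => (hsol t ht).2.2.2
  refine ⟨Φ, Y, R, G, fun t ht => ?_, hφΦ, hyY, hρR, hHG⟩
  refine ⟨?_, ?_, ?_, ?_⟩ <;> revert t
  · exact hasDerivWithinAt_Icc_of_eqOn_Ico hb hΦ hY hφΦ hyY fun s hs => (hsol s hs).1
  · refine hasDerivWithinAt_Icc_of_eqOn_Ico hb hY ?_ hyY (fun s hs => ?_)
      fun s hs => (hsol s hs).2.1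
    · fun_prop
    · simp only [hφΦ hs, hyY hs, hρR hs, hHG hs]
  · refine hasDerivWithinAt_Icc_of_eqOn_Ico hb hR ?_ hρR (fun s hs => ?_)
      fun s hs => (hsol s hs).2.2.1
    · fun_prop
    · simp only [hφΦ hs, hyY hs, hρR hs, hHG hs]
  · refine hasDerivWithinAt_Icc_of_eqOn_Ico hb hG ?_ hHG (fun s hs => ?_)
      fun s hs => (hsol s hs).2.2.2
    · fun_prop
    · simp only [hyY hs, hρR hs]

end IsFLRWSolution

/-- Lemma 2: if along a right-maximal solution the potential is eventually
bounded above by `V̄` with either `V̄ < 0`, or `V̄ ≥ 0` and `H(t₁) < -√(V̄/3)`, then the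
solution blows up in finite time: `T < ∞` and `H(t) → -∞` as `t → T⁻`. -/
theorem flrw_lemma2_finite_time_recollapse
    (γ : ℝ) (hγ : 0 < γ) (hγ2 : γ ≤ 2)
    (α V : ℝ → ℝ) (hα : Continuous α) (hV : ContDiff ℝ 2 V)
    (t₀ : ℝ) (T : EReal) (hT : (t₀ : EReal) < T)
    (φ y ρ H : ℝ → ℝ)
    (hsol : IsFLRWSolution γ α V (IcoE t₀ T) φ y ρ H)
    (hmax : RightMaximal γ α V t₀ T φ y ρ H)
    (hcon : ∀ t ∈ IcoE t₀ T, FriedmannConstraint V φ y ρ H t)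
    (hρ₀ : 0 ≤ ρ t₀)
    (t₁ : ℝ) (ht₁ : t₁ ∈ IcoE t₀ T) (Vbar : ℝ)
    (hbound : ∀ t ∈ IcoE t₀ T, t₁ ≤ t → V (φ t) ≤ Vbar)
    (hcase : Vbar < 0 ∨ (0 ≤ Vbar ∧ H t₁ < -Real.sqrt (Vbar / 3))) :
    T < ⊤ ∧ Tendsto H (leftLimFilter T) atBot := by
  have hρ := hsol.rho_nonneg hα hρ₀
  have hTtop := hsol.lt_top_of_potential_le hγ hγ2 hcon hρ ht₁.1 hbound hcase
  obtain ⟨τ, rfl⟩ : ∃ τ : ℝ, T = τ := ⟨T.toReal, (EReal.coe_toReal hTtop.ne hT.ne_bot).symm⟩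
  refine ⟨hTtop, tendsto_leftLimFilter_atBot_of_antitoneOn
    (hsol.antitoneOn_hubble (convex_IcoE t₀ τ) hγ.le hρ) fun ⟨L, hL⟩ => ?_⟩
  -- a Hubble rate bounded below keeps the whole state in a compact set, so the solution extends
  obtain ⟨K, hK, hmem⟩ := hsol.exists_isCompact_forall_mem_of_le_hubble hγ.le hV.continuous hcon
    hρ fun t ht => hL ⟨t, ht, rfl⟩
  have hext := hsol.extendsSol_Icc hα (hV.continuous_deriv (by norm_num))
    (EReal.coe_lt_coe_iff.1 hT) hK hmem
  exact hmax (Or.inl ⟨EReal.coe_ne_top τ, by simpa using hext⟩)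
end

section
/- (Proposition: case of bounded scalar field.) Assume 0 < γ ≤ 2. Let (φ, y, ρ, H) be a solution of the flat FLRW system on I = [t₀, T) satisfying the Friedmann constraint at every t ∈ I, with ρ(t₀) ≥ 0. Suppose the scalar field φ is bounded on I and the Hubble function H is not bounded below on I. Then T < ∞ and H(t) → −∞ as t → T⁻. -/
open Real Set Filter

/-!
Bounding `φ` bounds `V(φ)` above by some `C`, and since `γ ≤ 2` the Friedmann constraint turns
`H' = -(y² + γρ)/2` into the Riccati inequality `H' ≤ -(γ/2)(3H² - C)`, hence `H' ≤ -γH²` as soon as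
`H ≤ -max 1 C`. Once `H` drops below that level it can therefore only decrease, and `-1/H` decreases
at rate at least `γ` while staying positive, so the solution lives for at most `-1/(γ H(s))` after
any such time `s`. As `H` is unbounded below, this forces `T < ∞` and `H → -∞`.
-/

section Riccati

variable {I : Set ℝ} {f f' : ℝ → ℝ} {c K : ℝ}

theorem HasDerivWithinAt.Ici_of_ordConnected (hI : I.OrdConnected) {x b d : ℝ}
    (h : HasDerivWithinAt f d I x) (hx : x ∈ I) (hb : b ∈ I) (hxb : x < b) :
    HasDerivWithinAt f d (Ici x) x :=
  (h.mono (hI.out hx hb)).mono_of_mem_nhdsWithin (Icc_mem_nhdsGE hxb)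

variable (hI : I.OrdConnected) (hf : ∀ t ∈ I, HasDerivWithinAt f (f' t) I t)
  (hK : 0 < K) (hc : 0 < c) (hric : ∀ t ∈ I, f t ≤ -K → f' t ≤ -c * f t ^ 2)
include hI hf hK hc hric

theorem riccati_le_of_le_neg {s b : ℝ} (hs : s ∈ I) (hfs : f s ≤ -K) (hb : b ∈ I)
    (hsb : s ≤ b) : f b ≤ f s := by
  have hsub := hI.out hs hb
  refine image_le_of_deriv_right_lt_deriv_boundary' (B := fun _ => f s) (B' := 0)
    (fun x hx => (hf x (hsub hx)).continuousWithinAt.mono hsub)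
    (fun x hx => (hf x (hsub (Ico_subset_Icc_self hx))).Ici_of_ordConnected hI
      (hsub (Ico_subset_Icc_self hx)) hb hx.2)
    le_rfl continuousOn_const (fun x _ => hasDerivWithinAt_const x _ _) ?_ ⟨hsb, le_rfl⟩
  intro x hx hfx
  have hpos : 0 < c * f x ^ 2 := mul_pos hc (sq_pos_of_neg (by linarith))
  calc f' x ≤ -c * f x ^ 2 := hric x (hsub (Ico_subset_Icc_self hx)) (hfx ▸ hfs)
    _ < 0 := by linarith

theorem riccati_mul_sub_lt {s b : ℝ} (hs : s ∈ I) (hfs : f s ≤ -K) (hb : b ∈ I)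
    (hsb : s ≤ b) : c * (b - s) < -(f s)⁻¹ := by
  have hsub := hI.out hs hb
  have hneg : ∀ x ∈ Icc s b, f x < 0 := fun x hx => by
    linarith [riccati_le_of_le_neg hI hf hK hc hric hs hfs (hsub hx) hx.1]
  have hanti : AntitoneOn (fun t => -(f t)⁻¹ + c * t) (Icc s b) := by
    refine antitoneOn_of_hasDerivWithinAt_nonpos (f' := fun x => f' x / f x ^ 2 + c)
      (convex_Icc s b) ?_ ?_ ?_
    · exact (ContinuousOn.inv₀ (fun x hx => (hf x (hsub hx)).continuousWithinAt.mono hsub)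
        fun x hx => (hneg x hx).ne).neg.add (continuousOn_const.mul continuousOn_id)
    · intro x hx
      rw [interior_Icc] at hx ⊢
      have hxI := hsub (Ioo_subset_Icc_self hx)
      have h := (((hf x hxI).inv (hneg x (Ioo_subset_Icc_self hx)).ne).neg.add
        ((hasDerivWithinAt_id x I).const_mul c)).mono (Ioo_subset_Icc_self.trans hsub)
      exact h.congr_deriv (by ring)
    · intro x hx
      rw [interior_Icc] at hx
      have hfx := hneg x (Ioo_subset_Icc_self hx)
      have hle := hric x (hsub (Ioo_subset_Icc_self hx))
        ((riccati_le_of_le_neg hI hf hK hc hric hs hfs (hsub (Ioo_subset_Icc_self hx))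
          hx.1.le).trans hfs)
      rw [← le_neg_iff_add_nonpos_right, div_le_iff₀ (sq_pos_of_neg hfx)]
      linarith
  have hmono := hanti ⟨le_rfl, hsb⟩ ⟨hsb, le_rfl⟩ hsb
  have hpos : 0 < -(f b)⁻¹ := neg_pos.2 (inv_lt_zero.2 (hneg b ⟨hsb, le_rfl⟩))
  simp only at hmono
  linarith

theorem riccati_bddAbove_of_not_bddBelow (hunbdd : ¬ BddBelow (f '' I)) : BddAbove I := by
  obtain ⟨_, ⟨s, hs, rfl⟩, hfs⟩ := not_bddBelow_iff.1 hunbdd (-K)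
  refine ⟨s + -(f s)⁻¹ / c, fun b hb => ?_⟩
  have hpos : 0 ≤ -(f s)⁻¹ / c :=
    div_nonneg (neg_nonneg.2 (inv_nonpos.2 (by linarith))) hc.le
  rcases le_total b s with hbs | hsb
  · linarith
  · have h := riccati_mul_sub_lt hI hf hK hc hric hs hfs.le hb hsb
    rw [← lt_div_iff₀' hc] at h
    linarith

theorem riccati_eventually_le_of_not_bddBelow (hunbdd : ¬ BddBelow (f '' I)) (m : ℝ) :
    ∃ s ∈ I, ∀ t ∈ I, s ≤ t → f t ≤ m := by
  obtain ⟨_, ⟨s, hs, rfl⟩, hfs⟩ := not_bddBelow_iff.1 hunbdd (min m (-K))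
  refine ⟨s, hs, fun t ht hst => ?_⟩
  have hfK : f s ≤ -K := hfs.le.trans (min_le_right _ _)
  linarith [riccati_le_of_le_neg hI hf hK hc hric hs hfK ht hst, min_le_left m (-K)]

end Riccati

theorem ordConnected_IcoE (t₀ : ℝ) (T : EReal) : (IcoE t₀ T).OrdConnected :=
  ⟨fun _ ha _ hb _ hx =>
    ⟨ha.1.trans hx.1, lt_of_le_of_lt (EReal.coe_le_coe_iff.2 hx.2) hb.2⟩⟩

theorem lt_top_of_bddAbove_IcoE {t₀ : ℝ} {T : EReal} (h : BddAbove (IcoE t₀ T)) : T < ⊤ := by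
  obtain ⟨B, hB⟩ := h
  rw [lt_top_iff_ne_top]
  rintro rfl
  have hmem : max t₀ B + 1 ∈ IcoE t₀ ⊤ :=
    ⟨by linarith [le_max_left t₀ B], EReal.coe_lt_top _⟩
  linarith [hB hmem, le_max_right t₀ B]

theorem tendsto_leftLimFilter_atBot {t₀ : ℝ} {T : EReal} {f : ℝ → ℝ}
    (h : ∀ m, ∃ s ∈ IcoE t₀ T, ∀ t ∈ IcoE t₀ T, s ≤ t → f t ≤ m) :
    Tendsto f (leftLimFilter T) atBot := by
  refine tendsto_atBot.2 fun m => ?_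
  obtain ⟨s, hs, hfs⟩ := h m
  have hmem : (fun t : ℝ => (t : EReal)) ⁻¹' Ioo (s : EReal) T ∈ leftLimFilter T :=
    preimage_mem_comap (Ioo_mem_nhdsLT_of_mem ⟨hs.2, le_rfl⟩)
  filter_upwards [hmem] with t ⟨hst, htT⟩
  have hst : s ≤ t := (EReal.coe_lt_coe_iff.1 hst).le
  exact hfs t ⟨hs.1.trans hst, htT⟩ hst

/-- Since `γ ≤ 2`, `y² + γρ ≥ γ (y²/2 + ρ) = γ (3H² - V(φ))`. -/
theorem FriedmannConstraint.hubble_deriv_le {γ C : ℝ} {V φ y ρ H : ℝ → ℝ} {t : ℝ}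
    (hcon : FriedmannConstraint V φ y ρ H t) (hγ : 0 ≤ γ) (hγ2 : γ ≤ 2) (hVC : V (φ t) ≤ C)
    (hH : H t ≤ -max 1 C) :
    -(1/2) * (y t ^ 2 + γ * ρ t) ≤ -γ * H t ^ 2 := by
  unfold FriedmannConstraint at hcon
  have hHC : C ≤ H t ^ 2 := by nlinarith [le_max_left 1 C, le_max_right 1 C]
  nlinarith [mul_nonneg (sub_nonneg.2 hγ2) (sq_nonneg (y t)), mul_nonneg hγ (sub_nonneg.2 hVC),
    mul_nonneg hγ (sub_nonneg.2 hHC)]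

theorem flrw_recollapse_of_bounded_scalar_field_general
    (γ : ℝ) (hγ : 0 < γ) (hγ2 : γ ≤ 2)
    (α V : ℝ → ℝ) (hV : ContDiff ℝ 2 V)
    (t₀ : ℝ) (T : EReal)
    (φ y ρ H : ℝ → ℝ)
    (hsol : IsFLRWSolution γ α V (IcoE t₀ T) φ y ρ H)
    (hcon : ∀ t ∈ IcoE t₀ T, FriedmannConstraint V φ y ρ H t)
    (hφbdd : ∃ M : ℝ, ∀ t ∈ IcoE t₀ T, |φ t| ≤ M)
    (hHunbdd : ¬ ∃ m : ℝ, ∀ t ∈ IcoE t₀ T, m ≤ H t) :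
    T < ⊤ ∧ Tendsto H (leftLimFilter T) atBot := by
  obtain ⟨M, hM⟩ := hφbdd
  obtain ⟨C, hC⟩ := (isCompact_Icc (a := -M) (b := M)).bddAbove_image (f := V)
    hV.continuous.continuousOn
  have hVC : ∀ t ∈ IcoE t₀ T, V (φ t) ≤ C := fun t ht => hC ⟨φ t, abs_le.1 (hM t ht), rfl⟩
  have hI := ordConnected_IcoE t₀ T
  have hH : ∀ t ∈ IcoE t₀ T, HasDerivWithinAt H (-(1/2) * (y t ^ 2 + γ * ρ t)) (IcoE t₀ T) t :=
    fun t ht => (hsol t ht).2.2.2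
  have hric : ∀ t ∈ IcoE t₀ T, H t ≤ -max 1 C → -(1/2) * (y t ^ 2 + γ * ρ t) ≤ -γ * H t ^ 2 :=
    fun t ht => (hcon t ht).hubble_deriv_le hγ.le hγ2 (hVC t ht)
  have hK : (0 : ℝ) < max 1 C := lt_max_of_lt_left one_pos
  have hunbdd : ¬ BddBelow (H '' IcoE t₀ T) := by
    simpa only [bddBelow_def, forall_mem_image] using hHunbdd
  exact ⟨lt_top_of_bddAbove_IcoE (riccati_bddAbove_of_not_bddBelow hI hH hK hγ hric hunbdd),
    tendsto_leftLimFilter_atBot (riccati_eventually_le_of_not_bddBelow hI hH hK hγ hric hunbdd)⟩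

/-- if the scalar field is bounded and the Hubble function is not bounded
below along a solution, then `T < ∞` and `H(t) → -∞` as `t → T⁻`. -/
theorem flrw_recollapse_of_bounded_scalar_field
    (γ : ℝ) (hγ : 0 < γ) (hγ2 : γ ≤ 2)
    (α V : ℝ → ℝ) (hα : Continuous α) (hV : ContDiff ℝ 2 V)
    (t₀ : ℝ) (T : EReal) (hT : (t₀ : EReal) < T)
    (φ y ρ H : ℝ → ℝ)
    (hsol : IsFLRWSolution γ α V (IcoE t₀ T) φ y ρ H)
    (hcon : ∀ t ∈ IcoE t₀ T, FriedmannConstraint V φ y ρ H t)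
    (hρ₀ : 0 ≤ ρ t₀)
    (hφbdd : ∃ M : ℝ, ∀ t ∈ IcoE t₀ T, |φ t| ≤ M)
    (hHunbdd : ¬ ∃ m : ℝ, ∀ t ∈ IcoE t₀ T, m ≤ H t) :
    T < ⊤ ∧ Tendsto H (leftLimFilter T) atBot :=
  flrw_recollapse_of_bounded_scalar_field_general γ hγ hγ2 α V hV t₀ T φ y ρ H hsol hcon hφbdd
    hHunbdd
end
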